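/- Let T and S be closed densely defined unbounded operators from H₁ to H₂ with T ⊆ S. Then the following are equivalent: (i) D(T) = D(S) (equivalently, T = S); (ii) T*T = S*S; (iii) the operator T*S (with domain {u ∈ D(S) : Su ∈ D(T*)}) is self-adjoint. -/

import Mathlib

/-!
For a closed operator `A`, projecting `(u, v)` orthogonally onto the closed graph of `A` in
`E ⊕₂ F` yields `x ∈ D(A)` with `⟪u - x, y⟫ + ⟪v - A x, A y⟫ = 0` for all `y ∈ D(A)`. With
`v = 0` this says `A x ∈ D(A*)` and `x + A*A x = u`, so `1 + A*A` is onto; together with symmetry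
and positivity this makes `A*A` self-adjoint (von Neumann).

If `T*S` is self-adjoint, it extends the self-adjoint operators `T*T` and `S*S`, so all three
coincide. If `T*T = S*S`, then `D(S*S) ⊆ D(T)`; for `u ∈ D(S)` project `(u, S u)` onto the graph
of `T`: the residue `w = u - x` satisfies `⟪w, y⟫ + ⟪S w, S y⟫ = 0` for `y ∈ D(S*S)`, and taking
`y + S*S y = w` gives `w = 0`, so `u ∈ D(T)`.
-/

/-- Composition of two partially defined linear operators `g ∘ f` with the natural
domain `{x ∈ D(f) : f x ∈ D(g)}`, acting by `x ↦ g (f x)`. -/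
noncomputable def LinearPMap.pcomp {R E F G : Type*} [CommRing R]
    [AddCommGroup E] [Module R E] [AddCommGroup F] [Module R F]
    [AddCommGroup G] [Module R G] (g : F →ₗ.[R] G) (f : E →ₗ.[R] F) :
    E →ₗ.[R] G :=
  g.comp (f.domRestrict ((Submodule.comap f.toFun g.domain).map f.domain.subtype))
    (fun x => by
      obtain ⟨hxD, hxf⟩ := x.2
      obtain ⟨y, hy, hyx⟩ := hxD
      have hx : f.domRestrict _ x = f y := LinearPMap.domRestrict_apply hyx.symm
      rw [hx]
      exact hy)

namespace LinearPMap

section pcomp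

variable {R E F G : Type*} [CommRing R] [AddCommGroup E] [Module R E] [AddCommGroup F]
  [Module R F] [AddCommGroup G] [Module R G] (g : F →ₗ.[R] G) (f : E →ₗ.[R] F)

theorem mem_pcomp_domain {x : E} :
    x ∈ (g.pcomp f).domain ↔ ∃ hx : x ∈ f.domain, f ⟨x, hx⟩ ∈ g.domain := by
  constructor
  · rintro ⟨⟨y, hy, rfl⟩, hx⟩
    exact ⟨hx, hy⟩
  · rintro ⟨hx, hfx⟩
    exact ⟨⟨⟨x, hx⟩, hfx, rfl⟩, hx⟩

theorem pcomp_domain_le : (g.pcomp f).domain ≤ f.domain := fun _ hx =>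
  ((mem_pcomp_domain g f).mp hx).1

theorem pcomp_apply (x : (g.pcomp f).domain) (hx : (x : E) ∈ f.domain)
    (hfx : f ⟨x, hx⟩ ∈ g.domain) : g.pcomp f x = g ⟨f ⟨x, hx⟩, hfx⟩ := by
  show g ⟨f.domRestrict _ x, _⟩ = _
  congr 2

variable {g f} in
theorem pcomp_mono {g' : F →ₗ.[R] G} {f' : E →ₗ.[R] F} (hg : g ≤ g') (hf : f ≤ f') :
    g.pcomp f ≤ g'.pcomp f' := by
  refine ⟨fun x hx => ?_, fun x y hxy => ?_⟩
  · obtain ⟨hxf, hfx⟩ := (mem_pcomp_domain g f).mp hx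
    exact (mem_pcomp_domain g' f').mpr ⟨hf.1 hxf, apply_comp_inclusion hf ⟨x, hxf⟩ ▸ hg.1 hfx⟩
  · obtain ⟨hxf, hfx⟩ := (mem_pcomp_domain g f).mp x.2
    obtain ⟨hyf, hfy⟩ := (mem_pcomp_domain g' f').mp y.2
    rw [pcomp_apply g f x hxf hfx, pcomp_apply g' f' y hyf hfy]
    exact hg.2 (hf.2 hxy)

end pcomp

section Hilbert

variable {E F : Type*} [NormedAddCommGroup E] [InnerProductSpace ℂ E] [CompleteSpace E]
  [NormedAddCommGroup F] [InnerProductSpace ℂ F]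

open scoped InnerProductSpace LinearPMap

theorem exists_orthogonalProjection_graph [CompleteSpace F] (A : E →ₗ.[ℂ] F) (hA : A.IsClosed)
    (u : E) (v : F) :
    ∃ x : A.domain, ∀ y : A.domain, ⟪u - x, y⟫_ℂ + ⟪v - A x, A y⟫_ℂ = 0 := by
  let e := WithLp.prodContinuousLinearEquiv 2 ℂ E F
  let G : Submodule ℂ (WithLp 2 (E × F)) := A.graph.comap e.toLinearMap
  have : CompleteSpace G := (hA.preimage e.continuous).completeSpace_coe
  obtain ⟨x, hx⟩ := (mem_graph_iff A).mp (G.starProjection_apply_mem (e.symm (u, v)))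
  refine ⟨x, fun y => ?_⟩
  have hy : e.symm (y, A y) ∈ G := by simp [G, e]
  have := G.inner_left_of_mem_orthogonal hy (G.sub_starProjection_mem_orthogonal (e.symm (u, v)))
  have hres : (e.symm (u, v) - G.starProjection (e.symm (u, v))).ofLp = (u - x, v - A x) := by
    rw [hx.1, hx.2]; rfl
  rwa [WithLp.prod_inner_apply, hres] at this

theorem adjoint_le_adjoint {T S : E →ₗ.[ℂ] F} (hT : Dense (T.domain : Set E)) (h : T ≤ S) :
    S† ≤ T† :=
  IsFormalAdjoint.le_adjoint hT fun x y => by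
    rw [apply_comp_inclusion h x]
    exact (adjoint_isFormalAdjoint (hT.mono h.1)).symm _ y

theorem _root_.IsSelfAdjoint.eq_of_le {A C : E →ₗ.[ℂ] E} (hA : IsSelfAdjoint A)
    (hC : IsSelfAdjoint C) (h : A ≤ C) : A = C := by
  refine le_antisymm h ?_
  have := adjoint_le_adjoint hA.dense_domain h
  rwa [isSelfAdjoint_def.mp hA, isSelfAdjoint_def.mp hC] at this

theorem dense_domain_of_forall_exists_add_eq {B : E →ₗ.[ℂ] E}
    (hB : ∀ x : B.domain, 0 ≤ RCLike.re ⟪(x : E), B x⟫_ℂ)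
    (hsurj : ∀ u, ∃ x : B.domain, x + B x = u) : Dense (B.domain : Set E) := by
  rw [Submodule.dense_iff_topologicalClosure_eq_top, Submodule.topologicalClosure_eq_top_iff,
    Submodule.eq_bot_iff]
  intro u hu
  obtain ⟨x, rfl⟩ := hsurj u
  have hx : ‖(x : E)‖ ^ 2 + RCLike.re ⟪(x : E), B x⟫_ℂ = 0 := by
    rw [← inner_self_eq_norm_sq (𝕜 := ℂ), ← RCLike.re.map_add, ← inner_add_right,
      B.domain.inner_right_of_mem_orthogonal x.2 hu, RCLike.re.map_zero]
  obtain rfl : x = 0 := Subtype.ext (norm_eq_zero.mp (by nlinarith [hB x, norm_nonneg (x : E)]))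
  simp

theorem isSelfAdjoint_of_forall_exists_add_eq {B : E →ₗ.[ℂ] E} (hd : Dense (B.domain : Set E))
    (hB : B.IsFormalAdjoint B) (hsurj : ∀ u, ∃ x : B.domain, x + B x = u) : IsSelfAdjoint B := by
  have hle : B ≤ B† := hB.le_adjoint hd
  refine isSelfAdjoint_def.mpr (eq_of_le_of_domain_eq hle (le_antisymm hle.1 fun v hv => ?_)).symm
  obtain ⟨x, hx⟩ := hsurj (v + B† ⟨v, hv⟩)
  have hperp : ∀ u : B.domain, ⟪u + B u, v - x⟫_ℂ = 0 := fun u => by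
    calc ⟪u + B u, v - x⟫_ℂ = ⟪(u : E), v + B† ⟨v, hv⟩⟫_ℂ - ⟪(u : E), x + B x⟫_ℂ := by
          rw [inner_sub_right, inner_add_left, inner_add_left, inner_add_right, inner_add_right,
            (adjoint_isFormalAdjoint hd).symm u ⟨v, hv⟩, hB u x]
      _ = 0 := by rw [hx, sub_self]
  obtain ⟨w, hw⟩ := hsurj (v - x)
  have hvx := hperp w
  rw [hw, inner_self_eq_zero, sub_eq_zero] at hvx
  exact hvx ▸ x.2

variable (A : E →ₗ.[ℂ] F)

theorem inner_adjoint_pcomp_self_apply (hA : Dense (A.domain : Set E)) {z : E}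
    (hz : z ∈ A.domain) (x : (A†.pcomp A).domain) (hx : (x : E) ∈ A.domain) :
    ⟪z, A†.pcomp A x⟫_ℂ = ⟪A ⟨z, hz⟩, A ⟨x, hx⟩⟫_ℂ := by
  obtain ⟨_, hAx⟩ := (mem_pcomp_domain _ _).mp x.2
  rw [pcomp_apply _ _ x hx hAx]
  exact ((adjoint_isFormalAdjoint hA).symm ⟨z, hz⟩ ⟨_, hAx⟩).symm

theorem exists_add_adjoint_pcomp_self_eq [CompleteSpace F] (hA : A.IsClosed)
    (hAd : Dense (A.domain : Set E)) (u : E) : ∃ x : (A†.pcomp A).domain, x + A†.pcomp A x = u := by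
  obtain ⟨x, hx⟩ := exists_orthogonalProjection_graph A hA u 0
  have hAx : ∀ y : A.domain, ⟪u - x, y⟫_ℂ = ⟪A x, A y⟫_ℂ := fun y => by
    simpa [inner_neg_left, ← sub_eq_add_neg, sub_eq_zero] using hx y
  have hmem : A x ∈ A†.domain := mem_adjoint_domain_of_exists _ ⟨u - x, hAx⟩
  refine ⟨⟨x, (mem_pcomp_domain _ _).mpr ⟨x.2, hmem⟩⟩, ?_⟩
  rw [pcomp_apply _ _ _ x.2 hmem, adjoint_apply_eq hAd _ hAx]
  exact add_sub_cancel _ _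

theorem adjoint_pcomp_self_isFormalAdjoint (hA : Dense (A.domain : Set E)) :
    (A†.pcomp A).IsFormalAdjoint (A†.pcomp A) := fun x y => by
  have hx := pcomp_domain_le _ _ x.2
  have hy := pcomp_domain_le _ _ y.2
  rw [← inner_conj_symm, inner_adjoint_pcomp_self_apply A hA hy x hx,
    inner_adjoint_pcomp_self_apply A hA hx y hy, inner_conj_symm]

theorem isSelfAdjoint_adjoint_pcomp_self [CompleteSpace F] (hA : A.IsClosed)
    (hAd : Dense (A.domain : Set E)) :
    IsSelfAdjoint (A†.pcomp A) := by
  have hsurj := exists_add_adjoint_pcomp_self_eq A hA hAd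
  refine isSelfAdjoint_of_forall_exists_add_eq ?_ (adjoint_pcomp_self_isFormalAdjoint A hAd) hsurj
  refine dense_domain_of_forall_exists_add_eq (fun x => ?_) hsurj
  have hx := pcomp_domain_le _ _ x.2
  rw [inner_adjoint_pcomp_self_apply A hAd hx x hx, inner_self_eq_norm_sq]
  positivity

theorem eq_of_le_of_adjoint_pcomp_domain_le [CompleteSpace F] {T S : E →ₗ.[ℂ] F}
    (hT : T.IsClosed) (hS : S.IsClosed) (hSd : Dense (S.domain : Set E)) (h : T ≤ S)
    (hdom : (S†.pcomp S).domain ≤ T.domain) : T = S := by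
  refine eq_of_le_of_domain_eq h (le_antisymm h.1 fun u hu => ?_)
  obtain ⟨x, hx⟩ := exists_orthogonalProjection_graph T hT u (S ⟨u, hu⟩)
  set w : S.domain := ⟨u, hu⟩ - Submodule.inclusion h.1 x
  have hSw : S w = S ⟨u, hu⟩ - T x := by rw [S.map_sub, ← apply_comp_inclusion h x]
  obtain ⟨y, hy⟩ := exists_add_adjoint_pcomp_self_eq S hS hSd w
  have hyT := hdom y.2
  have hw : ⟪(w : E), w⟫_ℂ = 0 := by
    calc ⟪(w : E), w⟫_ℂ = ⟪(w : E), y + S†.pcomp S y⟫_ℂ := by rw [hy]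
      _ = ⟪(w : E), y⟫_ℂ + ⟪S w, S ⟨y, pcomp_domain_le _ _ y.2⟩⟫_ℂ := by
        rw [inner_add_right, inner_adjoint_pcomp_self_apply S hSd w.2]
      _ = ⟪u - x, y⟫_ℂ + ⟪S ⟨u, hu⟩ - T x, T ⟨y, hyT⟩⟫_ℂ := by
        rw [hSw, apply_comp_inclusion h ⟨y, hyT⟩]
        rfl
      _ = 0 := hx ⟨y, hyT⟩
  have hux : u = x := sub_eq_zero.mp (inner_self_eq_zero.mp hw)
  exact hux ▸ x.2

end Hilbert

end LinearPMap

/-- Let `T` and `S` be closed densely defined unbounded operators from `H₁` to `H₂` with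
`T ⊆ S`.  Then the following are equivalent:
(i) `D(T) = D(S)` (equivalently, `T = S`);
(ii) `T*T = S*S`;
(iii) the Gaffney-type operator `T*S` (with natural domain `{u ∈ D(S) : Su ∈ D(T*)}`)
is self-adjoint. -/
theorem tfae_gaffney {H₁ H₂ : Type*}
    [NormedAddCommGroup H₁] [InnerProductSpace ℂ H₁] [CompleteSpace H₁]
    [NormedAddCommGroup H₂] [InnerProductSpace ℂ H₂] [CompleteSpace H₂]
    (T S : H₁ →ₗ.[ℂ] H₂)
    (hTclosed : T.IsClosed) (hSclosed : S.IsClosed)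
    (hTdense : Dense (T.domain : Set H₁)) (hSdense : Dense (S.domain : Set H₁))
    (hTS : T ≤ S) :
    [T.domain = S.domain,
      T = S,
      T.adjoint.pcomp T = S.adjoint.pcomp S,
      IsSelfAdjoint (T.adjoint.pcomp S)].TFAE := by
  have hTT := LinearPMap.isSelfAdjoint_adjoint_pcomp_self T hTclosed hTdense
  have hSS := LinearPMap.isSelfAdjoint_adjoint_pcomp_self S hSclosed hSdense
  tfae_have 1 → 2 := LinearPMap.eq_of_le_of_domain_eq hTS
  tfae_have 2 → 1 := fun h => h ▸ rfl
  tfae_have 2 → 3 := fun h => h ▸ rfl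
  tfae_have 2 → 4 := fun h => h ▸ hSS
  tfae_have 4 → 3 := fun h => by
    rw [hTT.eq_of_le h (LinearPMap.pcomp_mono le_rfl hTS),
      hSS.eq_of_le h (LinearPMap.pcomp_mono (LinearPMap.adjoint_le_adjoint hTdense hTS) le_rfl)]
  tfae_have 3 → 2 := fun h => LinearPMap.eq_of_le_of_adjoint_pcomp_domain_le hTclosed hSclosed
    hSdense hTS (h ▸ LinearPMap.pcomp_domain_le _ _)
  tfae_finish
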